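/- Under the hypotheses of the i-SpaSP hidden-residual lemma (W satisfies RIP with δ_{4s} ≤ 0.1, H = Z + E with Z s-row-sparse and H entrywise nonnegative), the output residual V_t = W·H − W_{:,S_t}·H_{S_t,:} after t iterations satisfies ‖V_t‖_F ≤ ‖W‖_F · ((0.444)^t ‖μ(H)‖₂ + (14 + 7/√s)‖μ(E)‖₁). -/

import Mathlib

open Finset Matrix

noncomputable def mu {m n : ℕ} (X : Matrix (Fin m) (Fin n) ℝ) : Fin m → ℝ :=
  fun i => ∑ j, X i j

noncomputable def l1 {n : ℕ} (v : Fin n → ℝ) : ℝ := ∑ i, |v i|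

noncomputable def l2 {n : ℕ} (v : Fin n → ℝ) : ℝ := Real.sqrt (∑ i, (v i) ^ 2)

noncomputable def frob {m n : ℕ} (X : Matrix (Fin m) (Fin n) ℝ) : ℝ :=
  Real.sqrt (∑ i, ∑ j, (X i j) ^ 2)

def vrestrict {n : ℕ} (v : Fin n → ℝ) (S : Finset (Fin n)) : Fin n → ℝ :=
  fun i => if i ∈ S then v i else 0

def rowSel {m n : ℕ} (X : Matrix (Fin m) (Fin n) ℝ) (S : Finset (Fin m)) :
    Matrix (Fin m) (Fin n) ℝ := Matrix.of fun i j => if i ∈ S then X i j else 0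

def RIP {m n : ℕ} (W : Matrix (Fin m) (Fin n) ℝ) (r : ℕ) (δ : ℝ) : Prop :=
  ∀ x : Fin n → ℝ, (Finset.univ.filter (fun i => x i ≠ 0)).card ≤ r →
    (1 - δ) * (∑ i, (x i) ^ 2) ≤ ∑ i, (W.mulVec x i) ^ 2 ∧
    ∑ i, (W.mulVec x i) ^ 2 ≤ (1 + δ) * ∑ i, (x i) ^ 2

def isTopK {n : ℕ} (k : ℕ) (v : Fin n → ℝ) (S : Finset (Fin n)) : Prop :=
  S.card = k ∧ ∀ i ∈ S, ∀ j ∉ S, |v j| ≤ |v i|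

/-- One iteration of i-SpaSP: given the current active set `S`, compute the
residual `V = W·H − W·H_{S,:}`, the importance vector `y = μ(Wᵀ·V)`, take `Ω`
the support of the `2s` largest entries of `y`, merge `Ω* = Ω ∪ S`, restrict
`b = μ(H)|_{Ω*}` and take `S'` the support of the `s` largest entries of `b`. -/
def spaspStep {m n B : ℕ} (W : Matrix (Fin m) (Fin n) ℝ)
    (H : Matrix (Fin n) (Fin B) ℝ) (s : ℕ) (S S' : Finset (Fin n)) : Prop :=
  ∃ Ω : Finset (Fin n),
    isTopK (2 * s) (mu (Wᵀ * (W * H - W * rowSel H S))) Ω ∧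
    S' ⊆ Ω ∪ S ∧
    isTopK s (vrestrict (mu H) (Ω ∪ S)) S'

/-!
Write `x = μ(H) = z + e` with `z = μ(Z)` supported on the at most `s` nonzero rows of `Z` and
`e = μ(E)`. The output residual is `W (H - H_{S,:})` with `H - H_{S,:} = H_{Sᶜ,:}` entrywise
nonnegative, so `‖W H_{Sᶜ,:}‖_F ≤ ‖W‖_F ‖H_{Sᶜ,:}‖_F ≤ ‖W‖_F ‖x|_{Sᶜ}‖₂`: everything reduces to
the hidden residual `x|_{Sᶜ}`.

One iteration contracts it: `‖x|_{S'ᶜ}‖₂ ≤ 0.2 ‖x|_{Sᶜ}‖₂ + 4.4 ‖e‖₁`. With `u = z|_{Sᶜ}`, the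
vector `y = WᵀW x|_{Sᶜ}` is `u` plus a perturbation `g`, and RIP bounds `g` on any coordinate set
`Λ` of size `O(s)` by `δ ‖u‖₂ + (1 + δ) ‖e‖₁`. Since `Ω` carries the largest entries of `y`, the
energy of `y` on the missed support `supp u \ Ω` is at most its energy on the false detections
`Ω \ supp u`, where `y = g`; hence `‖u|_{Ωᶜ}‖₂ ≤ 2δ ‖u‖₂ + 2(1 + δ) ‖e‖₁`. Pruning `Ω ∪ S` to its
`s` largest entries discards at most `‖e‖₂`, because the support of `z` is a competing set of
size `s`. Unrolling the recursion from `S₀ = ∅` gives `0.2^t ‖x‖₂ + 5.5 ‖e‖₁`.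
-/

section norms

variable {n : ℕ}

lemma l2_eq_norm (v : Fin n → ℝ) : l2 v = ‖WithLp.toLp 2 v‖ := by
  simp [l2, EuclideanSpace.norm_eq]

lemma l2_nonneg (v : Fin n → ℝ) : 0 ≤ l2 v := Real.sqrt_nonneg _

lemma l2_eq_zero {v : Fin n → ℝ} : l2 v = 0 ↔ v = 0 := by
  rw [l2_eq_norm, norm_eq_zero, WithLp.toLp_eq_zero]

lemma l1_nonneg (v : Fin n → ℝ) : 0 ≤ l1 v := sum_nonneg fun _ _ => abs_nonneg _

lemma l2_sq (v : Fin n → ℝ) : l2 v ^ 2 = v ⬝ᵥ v := by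
  rw [l2, Real.sq_sqrt (sum_nonneg fun _ _ => sq_nonneg _)]
  simp only [dotProduct, sq]

lemma dotProduct_le_l2_mul_l2 (u v : Fin n → ℝ) : u ⬝ᵥ v ≤ l2 u * l2 v :=
  Real.sum_mul_le_sqrt_mul_sqrt _ u v

lemma l2_add_le (u v : Fin n → ℝ) : l2 (u + v) ≤ l2 u + l2 v := by
  simp only [l2_eq_norm, WithLp.toLp_add]
  exact norm_add_le _ _

lemma l2_sub_le (u v : Fin n → ℝ) : l2 (u - v) ≤ l2 u + l2 v := by
  simp only [l2_eq_norm, WithLp.toLp_sub]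
  exact norm_sub_le _ _

lemma l2_smul (c : ℝ) (v : Fin n → ℝ) : l2 (c • v) = |c| * l2 v := by
  simp only [l2_eq_norm, WithLp.toLp_smul, norm_smul, Real.norm_eq_abs]

lemma l2_sum_le {ι : Type*} (s : Finset ι) (v : ι → Fin n → ℝ) :
    l2 (∑ k ∈ s, v k) ≤ ∑ k ∈ s, l2 (v k) := by
  simp only [l2_eq_norm, WithLp.toLp_sum]
  exact norm_sum_le _ _

lemma l2_le_l1 (v : Fin n → ℝ) : l2 v ≤ l1 v := by
  refine Real.sqrt_le_iff.mpr ⟨l1_nonneg v, ?_⟩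
  simpa only [l1, sq_abs] using sum_sq_le_sq_sum_of_nonneg fun i _ => abs_nonneg (v i)

lemma le_of_sq_le_mul {a c : ℝ} (hc : 0 ≤ c) (h : a ^ 2 ≤ a * c) : a ≤ c := by
  nlinarith

end norms

section restrict

variable {n : ℕ}

lemma vrestrict_univ (v : Fin n → ℝ) : vrestrict v univ = v := by
  funext i; simp [vrestrict]

lemma vrestrict_add (u v : Fin n → ℝ) (A : Finset (Fin n)) :
    vrestrict (u + v) A = vrestrict u A + vrestrict v A := by
  funext i; by_cases hi : i ∈ A <;> simp [vrestrict, hi]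

lemma vrestrict_vrestrict (v : Fin n → ℝ) (A B : Finset (Fin n)) :
    vrestrict (vrestrict v A) B = vrestrict v (A ∩ B) := by
  funext i; by_cases hA : i ∈ A <;> by_cases hB : i ∈ B <;> simp [vrestrict, hA, hB]

lemma vrestrict_congr {u v : Fin n → ℝ} {A : Finset (Fin n)} (h : ∀ i ∈ A, u i = v i) :
    vrestrict u A = vrestrict v A := by
  funext i; by_cases hi : i ∈ A <;> simp [vrestrict, hi, h]

lemma l2_vrestrict_sq (v : Fin n → ℝ) (A : Finset (Fin n)) :
    l2 (vrestrict v A) ^ 2 = ∑ i ∈ A, v i ^ 2 := by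
  rw [l2, Real.sq_sqrt (sum_nonneg fun _ _ => sq_nonneg _)]
  simp [vrestrict, apply_ite (· ^ 2)]

lemma l2_vrestrict_sq_eq_dotProduct (v : Fin n → ℝ) (A : Finset (Fin n)) :
    l2 (vrestrict v A) ^ 2 = vrestrict v A ⬝ᵥ v := by
  rw [l2_sq]
  exact sum_congr rfl fun i _ => by by_cases hi : i ∈ A <;> simp [vrestrict, hi]

lemma l2_vrestrict_le (v : Fin n → ℝ) (A : Finset (Fin n)) : l2 (vrestrict v A) ≤ l2 v := by
  refine Real.sqrt_le_sqrt (sum_le_sum fun i _ => ?_)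
  by_cases hi : i ∈ A <;> simp [vrestrict, hi, sq_nonneg]

lemma l1_vrestrict_le (v : Fin n → ℝ) (A : Finset (Fin n)) : l1 (vrestrict v A) ≤ l1 v :=
  sum_le_sum fun i _ => by by_cases hi : i ∈ A <;> simp [vrestrict, hi]

end restrict

lemma Finset.sum_le_sum_of_card_le_of_forall_le {ι : Type*} {f : ι → ℝ} {P Q : Finset ι}
    (hcard : Q.card ≤ P.card) (hf : ∀ i ∈ P, 0 ≤ f i) (hdom : ∀ i ∈ P, ∀ j ∈ Q, f j ≤ f i) :
    ∑ j ∈ Q, f j ≤ ∑ i ∈ P, f i := by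
  rcases P.eq_empty_or_nonempty with rfl | hP
  · simp [card_eq_zero.mp (Nat.le_zero.mp hcard)]
  obtain ⟨i₀, hi₀, hc⟩ := P.exists_mem_eq_inf' hP f
  calc ∑ j ∈ Q, f j ≤ Q.card • P.inf' hP f :=
        sum_le_card_nsmul _ _ _ fun j hj => le_inf' hP f fun i hi => hdom i hi j hj
    _ ≤ P.card • P.inf' hP f := nsmul_le_nsmul_left (hc ▸ hf i₀ hi₀) hcard
    _ ≤ ∑ i ∈ P, f i := card_nsmul_le_sum _ _ _ fun i hi => inf'_le f hi

lemma l2_vrestrict_le_l2_vrestrict {n : ℕ} {u v : Fin n → ℝ} {A B : Finset (Fin n)}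
    (h : ∑ i ∈ A, u i ^ 2 ≤ ∑ i ∈ B, v i ^ 2) : l2 (vrestrict u A) ≤ l2 (vrestrict v B) := by
  rw [← pow_le_pow_iff_left₀ (l2_nonneg _) (l2_nonneg _) two_ne_zero, l2_vrestrict_sq,
    l2_vrestrict_sq]
  exact h

section topK

variable {n k : ℕ} {v : Fin n → ℝ} {S A : Finset (Fin n)}

lemma isTopK.sum_sq_sdiff_le (hS : isTopK k v S) (hA : A.card ≤ k) :
    ∑ i ∈ A \ S, v i ^ 2 ≤ ∑ i ∈ S \ A, v i ^ 2 := by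
  refine sum_le_sum_of_card_le_of_forall_le ?_ (fun _ _ => sq_nonneg _) fun i hi j hj => ?_
  · exact card_sdiff_le_card_sdiff_iff.mpr (hS.1 ▸ hA)
  · exact sq_le_sq.mpr (hS.2 i (mem_sdiff.mp hi).1 j (mem_sdiff.mp hj).2)

lemma isTopK.l2_vrestrict_sdiff_le (hS : isTopK k v S) (hA : A.card ≤ k) :
    l2 (vrestrict v (A \ S)) ≤ l2 (vrestrict v (S \ A)) :=
  l2_vrestrict_le_l2_vrestrict (hS.sum_sq_sdiff_le hA)

lemma isTopK.l2_vrestrict_compl_le (hS : isTopK k v S) (hA : A.card ≤ k) :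
    l2 (vrestrict v Sᶜ) ≤ l2 (vrestrict v Aᶜ) := by
  refine l2_vrestrict_le_l2_vrestrict ?_
  have hSA : Sᶜ ∩ A = A \ S := by ext; simp [and_comm]
  have hAS : Aᶜ ∩ S = S \ A := by ext; simp [and_comm]
  have hout : Sᶜ \ A = Aᶜ \ S := by ext; simp [and_comm]
  rw [← sum_inter_add_sum_sdiff Sᶜ A, ← sum_inter_add_sum_sdiff Aᶜ S, hSA, hAS, hout]
  exact add_le_add_left (hS.sum_sq_sdiff_le hA) _

end topK

section selection

variable {n k : ℕ}

lemma isTopK.l2_vrestrict_compl_le_of_add {u g : Fin n → ℝ} {Ω A : Finset (Fin n)}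
    (hΩ : isTopK k (u + g) Ω) (hA : A.card ≤ k) (hu : ∀ i ∉ A, u i = 0) :
    l2 (vrestrict u Ωᶜ) ≤ l2 (vrestrict g (A \ Ω)) + l2 (vrestrict g (Ω \ A)) := by
  have hmiss : vrestrict u Ωᶜ = vrestrict (u + g) (A \ Ω) - vrestrict g (A \ Ω) := by
    rw [vrestrict_add, add_sub_cancel_right]
    funext i
    by_cases hiA : i ∈ A <;> by_cases hiΩ : i ∈ Ω <;> simp [vrestrict, hiA, hiΩ, hu]
  have hfalse : vrestrict (u + g) (Ω \ A) = vrestrict g (Ω \ A) :=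
    vrestrict_congr fun i hi => by simp [hu i (mem_sdiff.mp hi).2]
  calc l2 (vrestrict u Ωᶜ)
      ≤ l2 (vrestrict (u + g) (A \ Ω)) + l2 (vrestrict g (A \ Ω)) := hmiss ▸ l2_sub_le _ _
    _ ≤ l2 (vrestrict (u + g) (Ω \ A)) + l2 (vrestrict g (A \ Ω)) :=
        add_le_add_left (hΩ.l2_vrestrict_sdiff_le hA) _
    _ = _ := by rw [hfalse, add_comm]

lemma isTopK.l2_vrestrict_sdiff_le_of_add {z e : Fin n → ℝ} {P S T : Finset (Fin n)}
    (hS : isTopK k (vrestrict (z + e) P) S) (hT : T.card ≤ k) (hz : ∀ i ∉ T, z i = 0) :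
    l2 (vrestrict (z + e) (P \ S)) ≤ l2 e := by
  have hcompl := hS.l2_vrestrict_compl_le hT
  rw [vrestrict_vrestrict, vrestrict_vrestrict, ← sdiff_eq_inter_compl,
    ← sdiff_eq_inter_compl] at hcompl
  have hnoise : vrestrict (z + e) (P \ T) = vrestrict e (P \ T) :=
    vrestrict_congr fun i hi => by simp [hz i (mem_sdiff.mp hi).2]
  exact hcompl.trans (hnoise ▸ l2_vrestrict_le e (P \ T))

end selection

namespace RIP

variable {m n r s : ℕ} {W : Matrix (Fin m) (Fin n) ℝ} {δ : ℝ}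

lemma of_supported (h : RIP W r δ) {v : Fin n → ℝ} {A : Finset (Fin n)} (hA : A.card ≤ r)
    (hv : ∀ i ∉ A, v i = 0) :
    (1 - δ) * (v ⬝ᵥ v) ≤ (W *ᵥ v) ⬝ᵥ (W *ᵥ v) ∧ (W *ᵥ v) ⬝ᵥ (W *ᵥ v) ≤ (1 + δ) * (v ⬝ᵥ v) := by
  have hsupp : univ.filter (fun i => v i ≠ 0) ⊆ A := fun i hi =>
    by_contra fun hiA => (mem_filter.mp hi).2 (hv i hiA)
  simpa only [dotProduct, sq] using h v ((card_le_card hsupp).trans hA)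

lemma of_single (h : RIP W r δ) (hr : 1 ≤ r) (k : Fin n) :
    1 - δ ≤ l2 (W.col k) ^ 2 ∧ l2 (W.col k) ^ 2 ≤ 1 + δ := by
  have := h.of_supported (v := Pi.single k 1) (A := {k}) (by simpa using hr) fun j hj => by
    simp_all
  simpa [l2_sq] using this

lemma nonneg (h : RIP W r δ) (hr : 1 ≤ r) (k : Fin n) : 0 ≤ δ := by
  linarith [(h.of_single hr k).1.trans (h.of_single hr k).2]

lemma dotProduct_sub_le_add (h : RIP W r δ) {u v : Fin n → ℝ} {A : Finset (Fin n)}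
    (hA : A.card ≤ r) (hu : ∀ i ∉ A, u i = 0) (hv : ∀ i ∉ A, v i = 0) :
    (W *ᵥ u) ⬝ᵥ (W *ᵥ v) - u ⬝ᵥ v ≤ δ * (u ⬝ᵥ u + v ⬝ᵥ v) / 2 := by
  have hadd := (h.of_supported (v := u + v) hA fun i hi => by simp [hu i hi, hv i hi]).2
  have hsub := (h.of_supported (v := u - v) hA fun i hi => by simp [hu i hi, hv i hi]).1
  simp only [mulVec_add, mulVec_sub, add_dotProduct, dotProduct_add, sub_dotProduct,
    dotProduct_sub, dotProduct_comm v u, dotProduct_comm (W *ᵥ v) (W *ᵥ u)] at hadd hsub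
  linarith

lemma dotProduct_sub_le (h : RIP W r δ) {u v : Fin n → ℝ} {A : Finset (Fin n)}
    (hA : A.card ≤ r) (hu : ∀ i ∉ A, u i = 0) (hv : ∀ i ∉ A, v i = 0) :
    (W *ᵥ u) ⬝ᵥ (W *ᵥ v) - u ⬝ᵥ v ≤ δ * l2 u * l2 v := by
  rcases (l2_nonneg u).eq_or_lt with hu0 | hupos
  · rw [← hu0, l2_eq_zero.mp hu0.symm]
    simp
  rcases (l2_nonneg v).eq_or_lt with hv0 | hvpos
  · rw [← hv0, l2_eq_zero.mp hv0.symm]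
    simp
  -- rescaling `u` and `v` to equal norms turns the bound by `(‖u‖² + ‖v‖²) / 2` into `‖u‖ ‖v‖`
  have hscaled := h.dotProduct_sub_le_add hA (u := l2 v • u) (v := l2 u • v)
    (fun i hi => by simp [hu i hi]) (fun i hi => by simp [hv i hi])
  simp only [mulVec_smul, smul_dotProduct, dotProduct_smul, smul_eq_mul, ← l2_sq] at hscaled
  refine le_of_mul_le_mul_left (a := l2 u * l2 v) ?_ (mul_pos hupos hvpos)
  linarith

lemma l2_vrestrict_gram_sub_le (h : RIP W r δ) (hδ : 0 ≤ δ) {u : Fin n → ℝ}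
    {A Λ : Finset (Fin n)} (hΛA : (Λ ∪ A).card ≤ r) (hu : ∀ i ∉ A, u i = 0) :
    l2 (vrestrict (Wᵀ *ᵥ (W *ᵥ u) - u) Λ) ≤ δ * l2 u := by
  set w := vrestrict (Wᵀ *ᵥ (W *ᵥ u) - u) Λ
  have hw : ∀ i ∉ Λ ∪ A, w i = 0 := fun i hi => by simp_all [w, vrestrict]
  have hbil := h.dotProduct_sub_le hΛA hw fun i hi => hu i (by simp_all)
  refine le_of_sq_le_mul (mul_nonneg hδ (l2_nonneg u)) ?_
  rw [l2_vrestrict_sq_eq_dotProduct, dotProduct_sub, dotProduct_mulVec, vecMul_transpose]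
  linarith

lemma l2_mulVec_le (h : RIP W r δ) {v : Fin n → ℝ} {A : Finset (Fin n)} (hA : A.card ≤ r)
    (hv : ∀ i ∉ A, v i = 0) : l2 (W *ᵥ v) ≤ √(1 + δ) * l2 v := by
  rw [← Real.sqrt_sq (l2_nonneg (W *ᵥ v)), ← Real.sqrt_sq (l2_nonneg v),
    ← Real.sqrt_mul' _ (sq_nonneg _), l2_sq, l2_sq]
  exact Real.sqrt_le_sqrt (h.of_supported hA hv).2

lemma l2_col_le (h : RIP W r δ) (hr : 1 ≤ r) (k : Fin n) : l2 (W.col k) ≤ √(1 + δ) :=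
  Real.le_sqrt_of_sq_le (h.of_single hr k).2

lemma l2_mulVec_le_l1 (h : RIP W r δ) (hr : 1 ≤ r) (f : Fin n → ℝ) :
    l2 (W *ᵥ f) ≤ √(1 + δ) * l1 f := by
  have hcols : W *ᵥ f = ∑ k, f k • W.col k := by
    ext i; simp [mulVec, dotProduct, Matrix.col, mul_comm]
  calc l2 (W *ᵥ f) ≤ ∑ k, |f k| * l2 (W.col k) := by
        simpa only [hcols, l2_smul] using l2_sum_le univ fun k => f k • W.col k
    _ ≤ ∑ k, |f k| * √(1 + δ) := by gcongr with k; exact h.l2_col_le hr k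
    _ = √(1 + δ) * l1 f := by rw [l1, mul_sum]; simp only [mul_comm]

lemma l2_vrestrict_transpose_mulVec_le (h : RIP W r δ) {Λ : Finset (Fin n)} (hΛ : Λ.card ≤ r)
    (y : Fin m → ℝ) : l2 (vrestrict (Wᵀ *ᵥ y) Λ) ≤ √(1 + δ) * l2 y := by
  set w := vrestrict (Wᵀ *ᵥ y) Λ
  have hw : ∀ i ∉ Λ, w i = 0 := fun i hi => by simp [w, vrestrict, hi]
  refine le_of_sq_le_mul (mul_nonneg (Real.sqrt_nonneg _) (l2_nonneg y)) ?_
  calc l2 w ^ 2 = (W *ᵥ w) ⬝ᵥ y := by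
        rw [l2_vrestrict_sq_eq_dotProduct, dotProduct_mulVec, vecMul_transpose]
    _ ≤ l2 (W *ᵥ w) * l2 y := dotProduct_le_l2_mul_l2 _ _
    _ ≤ √(1 + δ) * l2 w * l2 y := by gcongr; exacts [l2_nonneg y, h.l2_mulVec_le hΛ hw]
    _ = l2 w * (√(1 + δ) * l2 y) := by ring

lemma l2_vrestrict_gram_le_l1 (h : RIP W r δ) (hδ : 0 ≤ δ) (hr : 1 ≤ r) {Λ : Finset (Fin n)}
    (hΛ : Λ.card ≤ r) (f : Fin n → ℝ) :
    l2 (vrestrict (Wᵀ *ᵥ (W *ᵥ f)) Λ) ≤ (1 + δ) * l1 f := by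
  calc l2 (vrestrict (Wᵀ *ᵥ (W *ᵥ f)) Λ) ≤ √(1 + δ) * l2 (W *ᵥ f) :=
        h.l2_vrestrict_transpose_mulVec_le hΛ _
    _ ≤ √(1 + δ) * (√(1 + δ) * l1 f) := by gcongr; exact h.l2_mulVec_le_l1 hr f
    _ = (1 + δ) * l1 f := by rw [← mul_assoc, Real.mul_self_sqrt (by linarith)]

lemma l2_vrestrict_gram_add_sub_le (h : RIP W r δ) (hδ : 0 ≤ δ) (hr : 1 ≤ r)
    {u : Fin n → ℝ} {A Λ : Finset (Fin n)} (hΛA : (Λ ∪ A).card ≤ r) (hu : ∀ i ∉ A, u i = 0)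
    (f : Fin n → ℝ) :
    l2 (vrestrict (Wᵀ *ᵥ (W *ᵥ (u + f)) - u) Λ) ≤ δ * l2 u + (1 + δ) * l1 f := by
  have hsplit : Wᵀ *ᵥ (W *ᵥ (u + f)) - u = (Wᵀ *ᵥ (W *ᵥ u) - u) + Wᵀ *ᵥ (W *ᵥ f) := by
    rw [mulVec_add, mulVec_add]; abel
  rw [hsplit, vrestrict_add]
  exact (l2_add_le _ _).trans (add_le_add (h.l2_vrestrict_gram_sub_le hδ hΛA hu)
    (h.l2_vrestrict_gram_le_l1 hδ hr ((card_le_card subset_union_left).trans hΛA) f))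

lemma l2_vrestrict_compl_topK_le (h : RIP W (4 * s) δ) (hδ : 0 ≤ δ) (hs : 1 ≤ s)
    {u f : Fin n → ℝ} {A Ω : Finset (Fin n)} (hA : A.card ≤ s) (hu : ∀ i ∉ A, u i = 0)
    (hΩ : isTopK (2 * s) (Wᵀ *ᵥ (W *ᵥ (u + f))) Ω) :
    l2 (vrestrict u Ωᶜ) ≤ 2 * δ * l2 u + 2 * (1 + δ) * l1 f := by
  rw [← add_sub_cancel u (Wᵀ *ᵥ (W *ᵥ (u + f)))] at hΩ
  have hmissed : ((A \ Ω) ∪ A).card ≤ 4 * s := by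
    rw [union_eq_right.mpr sdiff_subset]; omega
  have hfalse : ((Ω \ A) ∪ A).card ≤ 4 * s := by
    rw [sdiff_union_self_eq_union]
    have := card_union_le Ω A
    have := hΩ.1
    omega
  have hpert := fun {Λ} hΛ => h.l2_vrestrict_gram_add_sub_le (Λ := Λ) hδ (by omega) hΛ hu f
  linarith [hΩ.l2_vrestrict_compl_le_of_add (by omega) hu, hpert hmissed, hpert hfalse]

end RIP

lemma l2_vrestrict_compl_step_le {m n s : ℕ} {W : Matrix (Fin m) (Fin n) ℝ} {δ : ℝ}
    (hrip : RIP W (4 * s) δ) (hδ : δ ≤ 0.1) (hs : 1 ≤ s) {z e : Fin n → ℝ}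
    {T S Ω S' : Finset (Fin n)} (hT : T.card ≤ s) (hz : ∀ i ∉ T, z i = 0)
    (hΩ : isTopK (2 * s) (Wᵀ *ᵥ (W *ᵥ vrestrict (z + e) Sᶜ)) Ω) (hS'Ω : S' ⊆ Ω ∪ S)
    (hS' : isTopK s (vrestrict (z + e) (Ω ∪ S)) S') :
    l2 (vrestrict (z + e) S'ᶜ) ≤ 0.2 * l2 (vrestrict (z + e) Sᶜ) + 4.4 * l1 e := by
  obtain ⟨k, -⟩ := card_pos.mp (show 0 < Ω.card by rw [hΩ.1]; omega)
  have hδ0 := hrip.nonneg (by omega) k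
  set u := vrestrict z Sᶜ
  set f := vrestrict e Sᶜ
  have hu : ∀ i ∉ T, u i = 0 := fun i hi => by simp [u, vrestrict, hz i hi]
  rw [vrestrict_add] at hΩ
  have hident := hrip.l2_vrestrict_compl_topK_le hδ0 hs hT hu hΩ
  have hpruned := (hS'.l2_vrestrict_sdiff_le_of_add hT hz).trans (l2_le_l1 e)
  have hsplit : vrestrict (z + e) S'ᶜ =
      vrestrict u Ωᶜ + vrestrict e (Ω ∪ S)ᶜ + vrestrict (z + e) ((Ω ∪ S) \ S') := by
    funext i
    have := @hS'Ω i
    by_cases hS'i : i ∈ S' <;> by_cases hΩi : i ∈ Ω <;> by_cases hSi : i ∈ S <;>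
      simp_all [u, vrestrict]
  have hu_le : l2 u ≤ l2 (vrestrict (z + e) Sᶜ) + l1 e := by
    have := (l2_vrestrict_le e Sᶜ).trans (l2_le_l1 e)
    rw [show u = vrestrict (z + e) Sᶜ - f by rw [vrestrict_add, add_sub_cancel_right]]
    linarith [l2_sub_le (vrestrict (z + e) Sᶜ) f]
  have hf : l1 f ≤ l1 e := l1_vrestrict_le e Sᶜ
  have he := (l2_vrestrict_le e (Ω ∪ S)ᶜ).trans (l2_le_l1 e)
  calc l2 (vrestrict (z + e) S'ᶜ)
      ≤ l2 (vrestrict u Ωᶜ) + l2 (vrestrict e (Ω ∪ S)ᶜ)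
          + l2 (vrestrict (z + e) ((Ω ∪ S) \ S')) := by
        rw [hsplit]; exact (l2_add_le _ _).trans (by gcongr; exact l2_add_le _ _)
    _ ≤ (2 * δ * l2 u + 2 * (1 + δ) * l1 f) + l1 e + l1 e := by gcongr
    _ ≤ 0.2 * l2 (vrestrict (z + e) Sᶜ) + 4.4 * l1 e := by
        nlinarith [l2_nonneg u, l1_nonneg e, l1_nonneg f]

section matrix

variable {m n B : ℕ}

lemma mu_add (X Y : Matrix (Fin m) (Fin n) ℝ) : mu (X + Y) = mu X + mu Y := by
  funext i; simp [mu, sum_add_distrib]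

lemma mu_mul {k : ℕ} (A : Matrix (Fin k) (Fin m) ℝ) (M : Matrix (Fin m) (Fin n) ℝ) :
    mu (A * M) = A *ᵥ mu M := by
  funext i; simp only [mu, mul_apply, mulVec, dotProduct, mul_sum]; exact sum_comm

lemma mu_rowSel (H : Matrix (Fin m) (Fin n) ℝ) (S : Finset (Fin m)) :
    mu (rowSel H S) = vrestrict (mu H) S := by
  funext i; by_cases hi : i ∈ S <;> simp [mu, rowSel, vrestrict, hi]

lemma sub_rowSel (H : Matrix (Fin m) (Fin n) ℝ) (S : Finset (Fin m)) :
    H - rowSel H S = rowSel H Sᶜ := by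
  ext i j; by_cases hi : i ∈ S <;> simp [rowSel, hi]

open scoped Matrix.Norms.Frobenius in
lemma frob_eq_norm (X : Matrix (Fin m) (Fin n) ℝ) : frob X = ‖X‖ := by
  simp [frob, frobenius_norm_def, Real.sqrt_eq_rpow]

lemma frob_nonneg (X : Matrix (Fin m) (Fin n) ℝ) : 0 ≤ frob X := Real.sqrt_nonneg _

open scoped Matrix.Norms.Frobenius in
lemma frob_mul_le (A : Matrix (Fin m) (Fin n) ℝ) (M : Matrix (Fin n) (Fin B) ℝ) :
    frob (A * M) ≤ frob A * frob M := by
  simpa only [frob_eq_norm] using frobenius_norm_mul A M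

lemma frob_le_l2_mu {M : Matrix (Fin m) (Fin n) ℝ} (hM : ∀ i j, 0 ≤ M i j) :
    frob M ≤ l2 (mu M) :=
  Real.sqrt_le_sqrt (sum_le_sum fun i _ => sum_sq_le_sq_sum_of_nonneg fun j _ => hM i j)

lemma frob_mul_sub_mul_rowSel_le {H : Matrix (Fin n) (Fin B) ℝ} (hH : ∀ i j, 0 ≤ H i j)
    (W : Matrix (Fin m) (Fin n) ℝ) (S : Finset (Fin n)) :
    frob (W * H - W * rowSel H S) ≤ frob W * l2 (vrestrict (mu H) Sᶜ) := by
  have hsel : ∀ i j, 0 ≤ rowSel H Sᶜ i j := fun i j => by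
    simp only [rowSel, of_apply]; split_ifs <;> simp [hH]
  rw [← Matrix.mul_sub, sub_rowSel, ← mu_rowSel]
  exact (frob_mul_le W _).trans (mul_le_mul_of_nonneg_left (frob_le_l2_mu hsel) (frob_nonneg W))

end matrix

lemma spaspStep.l2_vrestrict_compl_le {m n B s : ℕ} {W : Matrix (Fin m) (Fin n) ℝ}
    {Z E H : Matrix (Fin n) (Fin B) ℝ} {δ : ℝ} {T S S' : Finset (Fin n)}
    (h : spaspStep W H s S S') (hrip : RIP W (4 * s) δ) (hδ : δ ≤ 0.1) (hs : 1 ≤ s)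
    (hT : T.card ≤ s) (hZ : ∀ i ∉ T, ∀ j, Z i j = 0) (hH : H = Z + E) :
    l2 (vrestrict (mu H) S'ᶜ) ≤ 0.2 * l2 (vrestrict (mu H) Sᶜ) + 4.4 * l1 (mu E) := by
  obtain ⟨Ω, hΩ, hS'Ω, hS'⟩ := h
  rw [← Matrix.mul_sub, sub_rowSel, mu_mul, mu_mul, mu_rowSel, hH, mu_add] at hΩ
  rw [hH, mu_add] at hS' ⊢
  exact l2_vrestrict_compl_step_le hrip hδ hs hT
    (fun i hi => sum_eq_zero fun j _ => hZ i hi j) hΩ hS'Ω hS'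

lemma le_pow_mul_add_div_of_le_mul_add {a : ℕ → ℝ} {q b : ℝ} (hq : 0 ≤ q) (hq1 : q < 1)
    (hb : 0 ≤ b) (h : ∀ t, a (t + 1) ≤ q * a t + b) (t : ℕ) : a t ≤ q ^ t * a 0 + b / (1 - q) := by
  have h1q : (0 : ℝ) < 1 - q := by linarith
  induction t with
  | zero => simpa using div_nonneg hb h1q.le
  | succ t ih =>
    calc a (t + 1) ≤ q * (q ^ t * a 0 + b / (1 - q)) + b := (h t).trans (by gcongr)
      _ = q ^ (t + 1) * a 0 + b / (1 - q) := by field_simp; ring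

theorem ispasp_output_residual {m n B s : ℕ} (hs : 1 ≤ s)
    (W : Matrix (Fin m) (Fin n) ℝ) (Z E H : Matrix (Fin n) (Fin B) ℝ) (δ : ℝ)
    (hδ : δ ≤ 0.1) (hrip : RIP W (4 * s) δ)
    (hZ : (@Finset.filter _ (fun i => ∃ j, Z i j ≠ 0) (fun _ => inferInstance) Finset.univ).card ≤ s)
    (hH : H = Z + E) (hpos : ∀ i j, 0 ≤ H i j)
    (S : ℕ → Finset (Fin n)) (h0 : S 0 = ∅)
    (hstep : ∀ t, spaspStep W H s (S t) (S (t + 1))) (t : ℕ) :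
    frob (W * H - W * rowSel H (S t))
      ≤ frob W *
        ((0.444 : ℝ) ^ t * l2 (mu H) + (14 + 7 / Real.sqrt s) * l1 (mu E)) := by
  have hcontract : ∀ u, l2 (vrestrict (mu H) (S (u + 1))ᶜ)
      ≤ 0.2 * l2 (vrestrict (mu H) (S u)ᶜ) + 4.4 * l1 (mu E) := fun u =>
    (hstep u).l2_vrestrict_compl_le hrip hδ hs hZ (fun i hi => by simpa using hi) hH
  have hrec := le_pow_mul_add_div_of_le_mul_add (a := fun u => l2 (vrestrict (mu H) (S u)ᶜ))
    (by norm_num) (by norm_num) (mul_nonneg (by norm_num) (l1_nonneg (mu E))) hcontract t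
  rw [h0, compl_empty, vrestrict_univ] at hrec
  refine (frob_mul_sub_mul_rowSel_le hpos W (S t)).trans
    (mul_le_mul_of_nonneg_left (hrec.trans ?_) (frob_nonneg W))
  have hpow : (0.2 : ℝ) ^ t * l2 (mu H) ≤ 0.444 ^ t * l2 (mu H) := by
    gcongr; exacts [l2_nonneg _, by norm_num]
  have hnoise := mul_nonneg (by positivity : (0 : ℝ) ≤ 7 / √(s : ℝ)) (l1_nonneg (mu E))
  rw [add_mul, div_eq_mul_inv]
  linarith [l1_nonneg (mu E)]
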